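/- arXiv:2009.03725 — 8 statements merged into one kernel-verified Lean document; each statement's English description precedes it below -/
import Mathlib

section
/- An element A = a + bT + cT^2 of K = Z[T]/(T^3 - 1) is special (i.e., either a = b = c, or |a-b| + |a-c| + |b-c| = 2) if and only if A·(T - 1) belongs to the set M = {0, ±(T-1), ±T(T-1), ±T^2(T-1)}. -/
open Polynomial

/-- The sum of coefficients of `g` over exponents `≡ i (mod 3)`. -/
noncomputable def Rcoef (i : ℕ) (g : Polynomial ℤ) : ℤ :=
  ∑ h ∈ g.support.filter (fun h => h % 3 = i), g.coeff h

/-- The ring `K = ℤ[T]/(T^3 - 1)`. -/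
abbrev K3 := Polynomial ℤ ⧸ Ideal.span {(X : Polynomial ℤ) ^ 3 - 1}

/-- The quotient map `ℤ[T] → K`. -/
noncomputable def mk3 : Polynomial ℤ →+* K3 := Ideal.Quotient.mk _

/-- The map `R = R^{(3)} : ℤ[t] → K`, `g ↦ R_0(g) + R_1(g)T + R_2(g)T^2`. -/
noncomputable def Rmap3 (g : Polynomial ℤ) : K3 :=
  mk3 (C (Rcoef 0 g)) + mk3 (C (Rcoef 1 g)) * mk3 X + mk3 (C (Rcoef 2 g)) * mk3 X ^ 2

/-- `a + bT + cT²` is special if `a = b = c` or `|a-b|+|a-c|+|b-c| = 2`. -/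
def Special (a b c : ℤ) : Prop :=
  (a = b ∧ b = c) ∨ |a - b| + |a - c| + |b - c| = 2

/-- The set `M = {0, ±(T-1), ±T(T-1), ±T²(T-1)} ⊆ K`. -/
noncomputable def Mset : Set K3 :=
  {0, mk3 X - 1, -(mk3 X - 1), mk3 X * (mk3 X - 1), -(mk3 X * (mk3 X - 1)),
    mk3 X ^ 2 * (mk3 X - 1), -(mk3 X ^ 2 * (mk3 X - 1))}

lemma mk3_eq_zero_iff (p q r : ℤ) :
    mk3 (C p + C q * X + C r * X ^ 2) = 0 ↔ p = 0 ∧ q = 0 ∧ r = 0 := by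
  constructor
  · intro h
    have h2 : ((X:Polynomial ℤ)^3 - 1) ∣ (C p + C q * X + C r * X ^ 2) := by
      rwa [mk3, Ideal.Quotient.eq_zero_iff_mem, Ideal.mem_span_singleton] at h
    have hd3 : ((X:Polynomial ℤ)^3 - 1).degree = 3 := by
      have := Polynomial.degree_X_pow_sub_C (R := ℤ) (by norm_num : 0 < 3) 1
      simpa using this
    have hd : (C p + C q * X + C r * X ^ 2).degree < ((X:Polynomial ℤ)^3 - 1).degree := by
      rw [hd3]
      have : (C p + C q * X + C r * X ^ 2).degree ≤ 2 := by
        compute_degree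
      exact lt_of_le_of_lt this (by norm_num)
    have hz := Polynomial.eq_zero_of_dvd_of_degree_lt h2 hd
    refine ⟨?_, ?_, ?_⟩
    · have h0 := congrArg (fun f => Polynomial.coeff f 0) hz
      simp only [coeff_add, coeff_C_mul, coeff_C, coeff_X_pow, coeff_X, coeff_zero] at h0
      norm_num at h0; exact h0
    · have h1 := congrArg (fun f => Polynomial.coeff f 1) hz
      simp only [coeff_add, coeff_C_mul, coeff_C, coeff_X_pow, coeff_X, coeff_zero] at h1
      norm_num at h1; exact h1
    · have h2' := congrArg (fun f => Polynomial.coeff f 2) hz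
      simp only [coeff_add, coeff_C_mul, coeff_C, coeff_X_pow, coeff_X, coeff_zero] at h2'
      norm_num at h2'; exact h2'
  · rintro ⟨rfl, rfl, rfl⟩; simp

lemma mk3_eq_iff (p q r p' q' r' : ℤ) :
    mk3 (C p + C q * X + C r * X ^ 2) = mk3 (C p' + C q' * X + C r' * X ^ 2) ↔
      p = p' ∧ q = q' ∧ r = r' := by
  rw [← sub_eq_zero, ← map_sub]
  have h : (C p + C q * X + C r * X ^ 2) - (C p' + C q' * X + C r' * X ^ 2)
      = C (p - p') + C (q - q') * X + C (r - r') * X ^ 2 := by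
    simp only [C_sub]; ring
  rw [h, mk3_eq_zero_iff]
  omega

lemma mk3_congr (g g' : Polynomial ℤ) (h : ((X:Polynomial ℤ)^3 - 1) ∣ (g - g')) :
    mk3 g = mk3 g' := by
  rw [← sub_eq_zero, ← map_sub, mk3, Ideal.Quotient.eq_zero_iff_mem, Ideal.mem_span_singleton]
  exact h

lemma prod_eq (a b c : ℤ) :
    mk3 (C a + C b * X + C c * X ^ 2) * (mk3 X - 1) =
      mk3 (C (c - a) + C (a - b) * X + C (b - c) * X ^ 2) := by
  have h1 : (mk3 X - 1 : K3) = mk3 (X - 1) := by simp [map_sub, map_one]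
  rw [h1, ← map_mul]
  apply mk3_congr
  exact ⟨C c, by simp only [C_sub]; ring⟩

lemma m0 : (0 : K3) = mk3 (C 0 + C 0 * X + C 0 * X ^ 2) := by simp
lemma m1 : (mk3 X - 1 : K3) = mk3 (C (-1) + C 1 * X + C 0 * X ^ 2) := by
  have h1 : (mk3 X - 1 : K3) = mk3 (X - 1) := by simp [map_sub, map_one]
  rw [h1]; apply mk3_congr; exact ⟨0, by simp only [C_neg, C_1, C_0]; ring⟩
lemma m2 : (mk3 X * (mk3 X - 1) : K3) = mk3 (C 0 + C (-1) * X + C 1 * X ^ 2) := by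
  have h1 : (mk3 X - 1 : K3) = mk3 (X - 1) := by simp [map_sub, map_one]
  rw [h1, ← map_mul]; apply mk3_congr; exact ⟨0, by simp only [C_neg, C_1, C_0]; ring⟩
lemma m3 : (mk3 X ^ 2 * (mk3 X - 1) : K3) = mk3 (C 1 + C 0 * X + C (-1) * X ^ 2) := by
  have h1 : (mk3 X - 1 : K3) = mk3 (X - 1) := by simp [map_sub, map_one]
  rw [h1, ← map_pow, ← map_mul]; apply mk3_congr
  exact ⟨1, by simp only [C_neg, C_1, C_0]; ring⟩
lemma mneg (p q r : ℤ) : (-(mk3 (C p + C q * X + C r * X ^ 2)) : K3)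
    = mk3 (C (-p) + C (-q) * X + C (-r) * X ^ 2) := by
  rw [← map_neg]; congr 1; simp only [C_neg]; ring

set_option maxHeartbeats 1000000 in
theorem special_iff_mul_T_sub_one_mem (a b c : ℤ) :
    Special a b c ↔
      mk3 (C a + C b * X + C c * X ^ 2) * (mk3 X - 1) ∈ Mset := by
  rw [prod_eq]
  simp only [Mset, Set.mem_insert_iff, Set.mem_singleton_iff]
  rw [m3, m2, m1, m0, mneg, mneg, mneg]
  simp only [mk3_eq_iff]
  simp only [Special]
  rcases abs_cases (a - b) with ⟨e1, f1⟩ | ⟨e1, f1⟩ <;>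
    rcases abs_cases (a - c) with ⟨e2, f2⟩ | ⟨e2, f2⟩ <;>
      rcases abs_cases (b - c) with ⟨e3, f3⟩ | ⟨e3, f3⟩ <;>
        exact ⟨fun h => by rcases h with h | h <;> omega,
          fun h => by rcases h with h | h | h | h | h | h | h <;> omega⟩
end

section
/- The product of any two special elements of K = Z[T]/(T^3 - 1) is again a special element. -/
open Polynomial

/-- An element of `K` is a special element if it is `a + bT + cT²` for some
special triple `(a,b,c)`. -/
noncomputable def IsSpecialElt (x : K3) : Prop :=
  ∃ a b c : ℤ, x = mk3 (C a + C b * X + C c * X ^ 2) ∧ Special a b c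

lemma special_iff (a b c : ℤ) : Special a b c ↔
    ∃ m, (a = m ∨ a = m + 1) ∧ (b = m ∨ b = m + 1) ∧ (c = m ∨ c = m + 1) := by
  unfold Special
  rcases abs_cases (a - b) with ⟨e1, _⟩ | ⟨e1, _⟩ <;>
  rcases abs_cases (a - c) with ⟨e2, _⟩ | ⟨e2, _⟩ <;>
  rcases abs_cases (b - c) with ⟨e3, _⟩ | ⟨e3, _⟩ <;>
  · rw [e1, e2, e3]
    constructor
    · intro h
      exact ⟨min a (min b c), by omega, by omega, by omega⟩
    · rintro ⟨m, hm⟩; omega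

lemma special_add (a b c k : ℤ) (h : Special a b c) :
    Special (a + k) (b + k) (c + k) := by
  unfold Special at *
  rcases h with ⟨rfl, rfl⟩ | h
  · left; simp
  · right; simpa using h

lemma special_core (p q r s t u : ℤ)
    (hp : p = 0 ∨ p = 1) (hq : q = 0 ∨ q = 1) (hr : r = 0 ∨ r = 1)
    (hs : s = 0 ∨ s = 1) (ht : t = 0 ∨ t = 1) (hu : u = 0 ∨ u = 1) :
    Special (p*s + q*u + r*t) (p*t + q*s + r*u) (p*u + q*t + r*s) := by
  rcases hp with rfl | rfl <;> rcases hq with rfl | rfl <;> rcases hr with rfl | rfl <;>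
  rcases hs with rfl | rfl <;> rcases ht with rfl | rfl <;> rcases hu with rfl | rfl <;>
  · unfold Special; decide

lemma mk3_mul (a b c d e f : ℤ) :
    mk3 (C a + C b * X + C c * X ^ 2) * mk3 (C d + C e * X + C f * X ^ 2) =
    mk3 (C (a*d + b*f + c*e) + C (a*e + b*d + c*f) * X + C (a*f + b*e + c*d) * X ^ 2) := by
  rw [← map_mul]
  unfold mk3
  rw [Ideal.Quotient.eq, Ideal.mem_span_singleton]
  refine ⟨C (b*f + c*e) + C (c*f) * X, ?_⟩
  simp only [C_add, C_mul]
  ring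

theorem mul_special (x y : K3) (hx : IsSpecialElt x) (hy : IsSpecialElt y) :
    IsSpecialElt (x * y) := by
  obtain ⟨a, b, c, rfl, hxs⟩ := hx
  obtain ⟨d, e, f, rfl, hys⟩ := hy
  refine ⟨a*d + b*f + c*e, a*e + b*d + c*f, a*f + b*e + c*d, mk3_mul a b c d e f, ?_⟩
  obtain ⟨m, ha, hb, hc⟩ := (special_iff a b c).mp hxs
  obtain ⟨n, hd, he, hf⟩ := (special_iff d e f).mp hys
  obtain ⟨p, hp, rfl⟩ : ∃ p, (p = 0 ∨ p = 1) ∧ a = m + p := by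
    rcases ha with rfl | rfl; exacts [⟨0, Or.inl rfl, by ring⟩, ⟨1, Or.inr rfl, rfl⟩]
  obtain ⟨q, hq, rfl⟩ : ∃ q, (q = 0 ∨ q = 1) ∧ b = m + q := by
    rcases hb with rfl | rfl; exacts [⟨0, Or.inl rfl, by ring⟩, ⟨1, Or.inr rfl, rfl⟩]
  obtain ⟨r, hr, rfl⟩ : ∃ r, (r = 0 ∨ r = 1) ∧ c = m + r := by
    rcases hc with rfl | rfl; exacts [⟨0, Or.inl rfl, by ring⟩, ⟨1, Or.inr rfl, rfl⟩]
  obtain ⟨s, hs, rfl⟩ : ∃ s, (s = 0 ∨ s = 1) ∧ d = n + s := by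
    rcases hd with rfl | rfl; exacts [⟨0, Or.inl rfl, by ring⟩, ⟨1, Or.inr rfl, rfl⟩]
  obtain ⟨t, ht, rfl⟩ : ∃ t, (t = 0 ∨ t = 1) ∧ e = n + t := by
    rcases he with rfl | rfl; exacts [⟨0, Or.inl rfl, by ring⟩, ⟨1, Or.inr rfl, rfl⟩]
  obtain ⟨u, hu, rfl⟩ : ∃ u, (u = 0 ∨ u = 1) ∧ f = n + u := by
    rcases hf with rfl | rfl; exacts [⟨0, Or.inl rfl, by ring⟩, ⟨1, Or.inr rfl, rfl⟩]
  have hcore := special_core p q r s t u hp hq hr hs ht hu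
  have h2 := special_add _ _ _ (3*m*n + m*(s + t + u) + n*(p + q + r)) hcore
  have e1 : (m+p)*(n+s) + (m+q)*(n+u) + (m+r)*(n+t)
      = p*s + q*u + r*t + (3*m*n + m*(s + t + u) + n*(p + q + r)) := by ring
  have e2 : (m+p)*(n+t) + (m+q)*(n+s) + (m+r)*(n+u)
      = p*t + q*s + r*u + (3*m*n + m*(s + t + u) + n*(p + q + r)) := by ring
  have e3 : (m+p)*(n+u) + (m+q)*(n+t) + (m+r)*(n+s)
      = p*u + q*t + r*s + (3*m*n + m*(s + t + u) + n*(p + q + r)) := by ring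
  rw [e1, e2, e3]
  exact h2
end

section
/- For any vector A = (a_1,...,a_m) of nonnegative integers, R(Δ(A;t)) = R(Δ(ε(A);t)) + k·(1 + T + T^2) for some integer k, where ε(A) = (a_1 mod 3, ..., a_m mod 3). -/
open Polynomial

/-- `Δ(a;t) = t + t² + ⋯ + tᵃ` (with `Δ(0;t) = 0`). -/
noncomputable def Delta1 (a : ℕ) : Polynomial ℤ := ∑ h ∈ Finset.Icc 1 a, X ^ h

/-- `Δ(A;t)` computed from the reversed list (last coordinate first). -/
noncomputable def DeltaRev : List ℕ → Polynomial ℤ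
  | [] => 1
  | [a] => Delta1 a
  | a :: b :: rest => DeltaRev (b :: rest) * Delta1 a - DeltaRev rest * X ^ (a + 1)

/-- `Δ(a₁,…,a_m;t)`, defined by `Δ(∅)=1`, `Δ(A,a) = Δ(A)·Δ(a) - Δ(A')·t^{a+1}`. -/
noncomputable def Delta (A : List ℕ) : Polynomial ℤ := DeltaRev A.reverse


lemma mk3_X3_sub_one : mk3 ((X : Polynomial ℤ) ^ 3 - 1) = 0 := by
  rw [mk3, Ideal.Quotient.eq_zero_iff_mem]
  exact Ideal.subset_span rfl

lemma mk3_X3 : mk3 ((X : Polynomial ℤ) ^ 3) = 1 := by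
  have := mk3_X3_sub_one
  rw [map_sub, map_one, sub_eq_zero] at this
  exact this

lemma mk3_Xpow (n : ℕ) : mk3 ((X : Polynomial ℤ) ^ n) = mk3 (X ^ (n % 3)) := by
  conv_lhs => rw [← Nat.div_add_mod n 3, pow_add, pow_mul, map_mul, map_pow, mk3_X3,
    one_pow, one_mul]

lemma Rmap3_eq_mk3 (g : Polynomial ℤ) : Rmap3 g = mk3 g := by
  conv_rhs => rw [g.as_sum_support]
  rw [map_sum]
  have h1 : ∀ h ∈ g.support, h % 3 ∈ Finset.range 3 := fun h _ =>
    Finset.mem_range.mpr (Nat.mod_lt _ (by norm_num))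
  rw [← Finset.sum_fiberwise_of_maps_to h1 (fun h => mk3 ((monomial h) (g.coeff h)))]
  have inner : ∀ j, (∑ h ∈ g.support.filter (fun h => h % 3 = j),
      mk3 ((monomial h) (g.coeff h))) = mk3 (C (Rcoef j g)) * mk3 X ^ j := by
    intro j
    rw [Rcoef, map_sum, map_sum, Finset.sum_mul]
    refine Finset.sum_congr rfl fun h hh => ?_
    have hj : h % 3 = j := (Finset.mem_filter.mp hh).2
    rw [← C_mul_X_pow_eq_monomial, map_mul, map_pow, ← map_pow, mk3_Xpow, hj, map_pow]
  rw [Finset.sum_range_succ, Finset.sum_range_succ, Finset.sum_range_one,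
    inner 0, inner 1, inner 2]
  simp [Rmap3]

lemma key_mul (g : Polynomial ℤ) :
    mk3 g * mk3 (1 + X + X ^ 2) = mk3 (C (g.eval 1)) * mk3 (1 + X + X ^ 2) := by
  have hdvd : (X - C (1:ℤ)) ∣ (g - C (g.eval 1)) := by
    rw [dvd_iff_isRoot]
    simp [IsRoot]
  obtain ⟨q, hq⟩ := hdvd
  have : mk3 (g - C (g.eval 1)) * mk3 (1 + X + X ^ 2) = 0 := by
    rw [← map_mul, hq]
    have : (X - C (1:ℤ)) * q * (1 + X + X ^ 2) = q * (X ^ 3 - 1) := by ring_nf; simp [C_1]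
    rw [this, map_mul, mk3_X3_sub_one, mul_zero]
  rw [map_sub] at this
  rw [sub_mul, sub_eq_zero] at this
  exact this


local notation "e3" => mk3 (1 + X + X ^ 2)
local notation "I3" => Ideal.span {(mk3 (1 + X + X ^ 2) : K3)}

lemma e3_mem : (e3 : K3) ∈ I3 := Ideal.subset_span rfl

lemma delta1_step (a : ℕ) :
    mk3 (Delta1 (a + 3)) = mk3 (Delta1 a) + mk3 (X ^ (a + 1)) * e3 := by
  have h : Delta1 (a + 3) = Delta1 a + (X ^ (a+1) + X ^ (a+2) + X ^ (a+3)) := by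
    rw [Delta1, Delta1, show a + 3 = (a+2)+1 from rfl, Finset.sum_Icc_succ_top (by omega),
      show a + 2 = (a+1)+1 from rfl, Finset.sum_Icc_succ_top (by omega),
      Finset.sum_Icc_succ_top (by omega)]
    ring
  rw [h, map_add, ← map_mul]
  congr 1
  congr 1
  ring

lemma delta1_mem (a : ℕ) : mk3 (Delta1 a) - mk3 (Delta1 (a % 3)) ∈ I3 := by
  induction a using Nat.strong_induction_on with
  | _ a ih =>
    by_cases h : a < 3
    · rw [Nat.mod_eq_of_lt h, sub_self]; exact zero_mem _
    · obtain ⟨b, rfl⟩ : ∃ b, a = b + 3 := ⟨a - 3, by omega⟩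
      rw [delta1_step, Nat.add_mod_right]
      have := ih b (by omega)
      have h2 : mk3 (X ^ (b+1)) * e3 ∈ I3 := Ideal.mul_mem_left _ _ e3_mem
      have := add_mem this h2
      convert this using 1
      ring

lemma mk3_Xpow_mod (a : ℕ) : mk3 ((X:Polynomial ℤ) ^ (a + 1)) = mk3 (X ^ (a % 3 + 1)) := by
  rw [mk3_Xpow, mk3_Xpow (a % 3 + 1), Nat.add_mod a 1, Nat.add_mod (a % 3) 1]

lemma deltaRev_mem : ∀ L : List ℕ,
    mk3 (DeltaRev L) - mk3 (DeltaRev (L.map (· % 3))) ∈ I3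
  | [] => by simp [DeltaRev]
  | [a] => by simpa [DeltaRev] using delta1_mem a
  | a :: b :: rest => by
    have h1 := deltaRev_mem (b :: rest)
    have h2 := deltaRev_mem rest
    have ha := delta1_mem a
    simp only [List.map_cons] at *
    rw [DeltaRev, DeltaRev, map_sub, map_sub, map_mul, map_mul, map_mul, map_mul,
      mk3_Xpow_mod a]
    set x := mk3 (DeltaRev (b :: rest))
    set x' := mk3 (DeltaRev ((b % 3) :: List.map (· % 3) rest))
    set y := mk3 (Delta1 a)
    set y' := mk3 (Delta1 (a % 3))
    set z := mk3 (DeltaRev rest)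
    set z' := mk3 (DeltaRev (List.map (· % 3) rest))
    have : x * y - z * mk3 (X ^ (a % 3 + 1)) - (x' * y' - z' * mk3 (X ^ (a % 3 + 1)))
        = (x - x') * y + x' * (y - y') - (z - z') * mk3 (X ^ (a % 3 + 1)) := by ring
    rw [this]
    exact sub_mem (add_mem (Ideal.mul_mem_right _ _ h1) (Ideal.mul_mem_left _ _ ha))
      (Ideal.mul_mem_right _ _ h2)


theorem Rmap3_Delta_eq_mod (A : List ℕ) :
    ∃ k : ℤ,
      Rmap3 (Delta A) =
        Rmap3 (Delta (A.map (· % 3))) + mk3 (C k) * mk3 (1 + X + X ^ 2) := by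
  have hmem : mk3 (Delta A) - mk3 (Delta (A.map (· % 3))) ∈ I3 := by
    rw [Delta, Delta, ← List.map_reverse]
    exact deltaRev_mem A.reverse
  obtain ⟨c, hc⟩ := Ideal.mem_span_singleton'.mp hmem
  obtain ⟨g, rfl⟩ := Ideal.Quotient.mk_surjective c
  refine ⟨g.eval 1, ?_⟩
  rw [Rmap3_eq_mk3, Rmap3_eq_mk3, ← key_mul]
  have : (Ideal.Quotient.mk _ g : K3) = mk3 g := rfl
  rw [this] at hc
  linear_combination -hc
end

section
/- For any vector A = (a_1,...,a_m) of nonnegative integers, the polynomial Δ(A;t) is 3-special: writing R(Δ(A;t)) = a + bT + cT^2, either a = b = c or |a−b| + |a−c| + |b−c| = 2. -/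
open Polynomial

/-- `g` is 3-special if its residue-class coefficient sums form a special triple. -/
def IsThreeSpecial (g : Polynomial ℤ) : Prop :=
  Special (Rcoef 0 g) (Rcoef 1 g) (Rcoef 2 g)

/-!
Evaluating at a primitive cube root of unity `ω` sends `g` with `R(g) = a + bT + cT²` to
`(a - c) + (b - c) ω ∈ ℤ[ω]`. This value is `0` iff `a = b = c`, and it is a unit iff its norm
`x² - xy + y²` (with `x = a - c`, `y = b - c`) equals `1`, which for integers happens exactly when
`|x| + |y| + |x - y| = 2`. So a polynomial is 3-special as soon as its value at `ω` is `0` or a unit.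

At `ω` the recursion for `Δ` reads `Δₘ = Δₘ₋₁ c - Δₘ₋₂ d`, where `(c, d) = (Δ(a; ω), ω^(a+1))` is
`(0, ω)`, `(ω, ω²)` or `(-1, 1)` according to `a mod 3`. Up to a common unit factor, the pair
`(Δₘ, Δₘ₋₁)` then never leaves the four pairs `(0, 1)`, `(1, 0)`, `(1, -1)`, `(1, ω²)`.
-/

open QuadraticAlgebra

abbrev EisensteinInt := QuadraticAlgebra ℤ (-1) (-1)

namespace EisensteinInt

theorem omega_sq : (ω : EisensteinInt) ^ 2 = -1 - ω := by
  ext <;> simp [sq]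

theorem omega_pow_three : (ω : EisensteinInt) ^ 3 = 1 := by
  ext <;> simp [pow_succ]

theorem omega_pow_mod_three (n : ℕ) : (ω : EisensteinInt) ^ n = ω ^ (n % 3) := by
  conv_lhs => rw [← Nat.div_add_mod n 3, pow_add, pow_mul, omega_pow_three, one_pow, one_mul]

theorem isUnit_omega : IsUnit (ω : EisensteinInt) :=
  IsUnit.of_mul_eq_one (ω ^ 2) (by rw [← pow_succ', omega_pow_three])

theorem norm_eq (z : EisensteinInt) : z.norm = z.re ^ 2 - z.re * z.im + z.im ^ 2 := by
  rw [norm_def]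
  ring

theorem norm_eq_one_of_isUnit {z : EisensteinInt} (hz : IsUnit z) : z.norm = 1 := by
  have hnonneg : 0 ≤ z.norm := by
    rw [norm_eq]
    nlinarith [sq_nonneg (z.re - z.im)]
  rcases Int.isUnit_iff.mp (isUnit_iff_norm_isUnit.mp hz) with h | h <;> omega

end EisensteinInt

open EisensteinInt

theorem abs_add_abs_add_abs_sub_eq_two {x y : ℤ} (h : x ^ 2 - x * y + y ^ 2 = 1) :
    |x| + |y| + |x - y| = 2 := by
  have hx : |x| ≤ 1 := (sq_le_one_iff_abs_le_one x).mp (by nlinarith [sq_nonneg (x - 2 * y)])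
  have hy : |y| ≤ 1 := (sq_le_one_iff_abs_le_one y).mp (by nlinarith [sq_nonneg (y - 2 * x)])
  rcases Int.abs_le_one_iff.mp hx with rfl | rfl | rfl <;>
    rcases Int.abs_le_one_iff.mp hy with rfl | rfl | rfl <;> simp_all

theorem special_of_eq_zero_or_isUnit {a b c : ℤ}
    (h : (⟨a - c, b - c⟩ : EisensteinInt) = 0 ∨ IsUnit (⟨a - c, b - c⟩ : EisensteinInt)) :
    Special a b c := by
  rcases h with h | h
  · simp only [QuadraticAlgebra.ext_iff, re_zero, im_zero, sub_eq_zero] at h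
    exact .inl ⟨h.1.trans h.2.symm, h.2⟩
  · have hnorm := norm_eq_one_of_isUnit h
    rw [norm_eq] at hnorm
    have := abs_add_abs_add_abs_sub_eq_two hnorm
    rw [sub_sub_sub_cancel_right] at this
    exact .inr (by linarith [abs_sub_comm (a - c) (b - c)])

theorem Rcoef_eq_sum (i : ℕ) (g : ℤ[X]) :
    Rcoef i g = g.sum fun n a => if n % 3 = i then a else 0 := by
  rw [Rcoef, Polynomial.sum, Finset.sum_filter]

theorem Rcoef_add (i : ℕ) (p q : ℤ[X]) : Rcoef i (p + q) = Rcoef i p + Rcoef i q := by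
  simp only [Rcoef_eq_sum]
  exact sum_add_index _ _ _ (fun _ => by simp) (fun _ _ _ => by split_ifs <;> rfl)

theorem Rcoef_monomial (i n : ℕ) (a : ℤ) :
    Rcoef i (monomial n a) = if n % 3 = i then a else 0 := by
  rw [Rcoef_eq_sum]
  exact sum_monomial_index _ _ (by simp)

theorem aeval_omega_eq_Rcoef (g : ℤ[X]) :
    aeval (ω : EisensteinInt) g = ⟨Rcoef 0 g - Rcoef 2 g, Rcoef 1 g - Rcoef 2 g⟩ := by
  induction g using Polynomial.induction_on' with
  | add p q hp hq =>
    rw [map_add, hp, hq]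
    ext <;> simp only [re_add, im_add, Rcoef_add] <;> ring
  | monomial n a =>
    rw [aeval_monomial, omega_pow_mod_three]
    simp only [Rcoef_monomial]
    rcases (by omega : n % 3 = 0 ∨ n % 3 = 1 ∨ n % 3 = 2) with h | h | h <;>
      ext <;> simp [h, pow_succ]

theorem isThreeSpecial_of_aeval_omega {g : ℤ[X]}
    (h : aeval (ω : EisensteinInt) g = 0 ∨ IsUnit (aeval (ω : EisensteinInt) g)) :
    IsThreeSpecial g := by
  rw [aeval_omega_eq_Rcoef] at h
  exact special_of_eq_zero_or_isUnit h

theorem aeval_omega_Delta1 (a : ℕ) :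
    (aeval (ω : EisensteinInt) (Delta1 a) = 0 ∧ (ω : EisensteinInt) ^ (a + 1) = ω) ∨
    (aeval (ω : EisensteinInt) (Delta1 a) = ω ∧ (ω : EisensteinInt) ^ (a + 1) = ω ^ 2) ∨
    (aeval (ω : EisensteinInt) (Delta1 a) = -1 ∧ (ω : EisensteinInt) ^ (a + 1) = 1) := by
  induction a with
  | zero => simp [Delta1]
  | succ a ih =>
    rw [Delta1, Finset.sum_Icc_succ_top (by omega), ← Delta1, map_add, map_pow, aeval_X,
      pow_succ _ (a + 1)]
    rcases ih with ⟨hD, hω⟩ | ⟨hD, hω⟩ | ⟨hD, hω⟩ <;> rw [hD, hω]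
    · simp [sq]
    · exact .inr (.inr ⟨by linear_combination omega_sq, by rw [← pow_succ, omega_pow_three]⟩)
    · simp

def IsReachablePair (x y : EisensteinInt) : Prop :=
  ∃ u, IsUnit u ∧ (x = 0 ∧ y = u ∨ x = u ∧ (y = 0 ∨ y = -u ∨ y = u * ω ^ 2))

theorem IsReachablePair.step {x y c d : EisensteinInt} (hxy : IsReachablePair x y)
    (hcd : (c = 0 ∧ d = ω) ∨ (c = ω ∧ d = ω ^ 2) ∨ (c = -1 ∧ d = 1)) :
    IsReachablePair (x * c - y * d) x := by
  have hω := isUnit_omega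
  obtain ⟨u, hu, ⟨hx, hy⟩ | ⟨hx, hy | hy | hy⟩⟩ := hxy <;> subst x y <;>
    obtain ⟨rfl, rfl⟩ | ⟨rfl, rfl⟩ | ⟨rfl, rfl⟩ := hcd
  · exact ⟨-u * ω, hu.neg.mul hω, .inr ⟨by ring, .inl rfl⟩⟩
  · exact ⟨-u * ω ^ 2, hu.neg.mul (hω.pow 2), .inr ⟨by ring, .inl rfl⟩⟩
  · exact ⟨-u, hu.neg, .inr ⟨by ring, .inl rfl⟩⟩
  · exact ⟨u, hu, .inl ⟨by ring, rfl⟩⟩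
  · exact ⟨u * ω, hu.mul hω,
      .inr ⟨by ring, .inr (.inr (by linear_combination -u * omega_pow_three))⟩⟩
  · exact ⟨-u, hu.neg, .inr ⟨by ring, .inr (.inl (neg_neg u).symm)⟩⟩
  · exact ⟨u * ω, hu.mul hω,
      .inr ⟨by ring, .inr (.inr (by linear_combination -u * omega_pow_three))⟩⟩
  · exact ⟨-u, hu.neg, .inr ⟨by linear_combination u * omega_sq, .inr (.inl (neg_neg u).symm)⟩⟩
  · exact ⟨u, hu, .inl ⟨by ring, rfl⟩⟩
  · exact ⟨-u, hu.neg,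
      .inr ⟨by linear_combination -u * omega_pow_three, .inr (.inl (neg_neg u).symm)⟩⟩
  · exact ⟨u, hu, .inl ⟨by linear_combination -u * ω * omega_pow_three, rfl⟩⟩
  · exact ⟨u * ω, hu.mul hω, .inr ⟨by linear_combination -u * omega_sq,
      .inr (.inr (by linear_combination -u * omega_pow_three))⟩⟩

theorem isReachablePair_aeval_omega_DeltaRev (a : ℕ) (L : List ℕ) :
    IsReachablePair (aeval ω (DeltaRev (a :: L))) (aeval ω (DeltaRev L)) := by
  induction L generalizing a with
  | nil =>
    have hstart : IsReachablePair 1 0 := ⟨1, isUnit_one, .inr ⟨rfl, .inl rfl⟩⟩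
    simpa [DeltaRev] using hstart.step (aeval_omega_Delta1 a)
  | cons b L ih =>
    simpa [DeltaRev] using (ih b).step (aeval_omega_Delta1 a)

theorem Delta_isThreeSpecial (A : List ℕ) : IsThreeSpecial (Delta A) := by
  refine isThreeSpecial_of_aeval_omega ?_
  rw [Delta]
  cases A.reverse with
  | nil => exact .inr (by simp [DeltaRev])
  | cons a L =>
    obtain ⟨u, hu, ⟨hx, -⟩ | ⟨hx, -⟩⟩ := isReachablePair_aeval_omega_DeltaRev a L
    · exact .inl hx
    · exact .inr (hx ▸ hu)
end

section
/- For every positive integer n and every pair i, j ∈ {0,1,2}, |r_{3,i}(n) − r_{3,j}(n)| ≤ 1, where r_{3,i}(n) is the number of partitions of n into distinct Fibonacci numbers whose number of parts is congruent to i modulo 3. -/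
/-!
Weight a Fibonacci partition `S` by `ω ^ #S`, where `ω` is a primitive cube root of unity. The
weights of the partitions of `n` add up to `r₀ + r₁ ω + r₂ ω² = (r₀ - r₂) + (r₁ - r₂) ω`, so the
claim says that this sum is `0` or one of the six units of `ℤ[ω]`.

If `f_k ≤ n < f_{k+1}`, a partition of `n` contains `f_k`, or else it contains `f_{k-1}`, because
the smaller Fibonacci numbers add up to `f_k - 2` only. Writing `n = y + f_k`, the total weight of
`n` is thus `ω` times the weight of `y` plus `ω` times the weight `g_{k-2}(y)` of the partitions of
`y + f_{k-2}` into parts `≤ f_{k-2}` (`shiftedWeight`); in the same way `g_{m+2}(y) = ω (weight y)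
+ ω g_m(y)`. By strong induction on `n`, every pair `(weight n, g_m(n))` with `n < f_{m+1}` lies in
an explicit finite set of admissible pairs, whose closure under these recursions is a finite check.
-/

/-- The Fibonacci numbers `f₁ = 1, f₂ = 2, fᵢ = fᵢ₋₁ + fᵢ₋₂` (value at `0` is junk). -/
def fibW : ℕ → ℕ
  | 0 => 0
  | 1 => 1
  | 2 => 2
  | (n + 3) => fibW (n + 2) + fibW (n + 1)

/-- `r d i n` is the number of partitions of `n` into distinct Fibonacci numbers
`f_j` (`j ≥ 1`) whose number of parts is `≡ i (mod d)`. -/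
noncomputable def r (d i n : ℕ) : ℕ :=
  Nat.card {S : Finset ℕ // (∀ j ∈ S, 1 ≤ j) ∧ (∑ j ∈ S, fibW j) = n ∧ S.card % d = i}

open Finset Nat

/-- Multiplication by `ω` on `ℤ[ω] ≅ ℤ × ℤ`, where `(a, b)` stands for `a + bω`
and `ω² = -1 - ω`. -/
def mulOmega : ℤ × ℤ →+ ℤ × ℤ :=
  AddMonoidHom.mk' (fun p => (-p.2, p.1 - p.2)) fun p q => by
    simp only [Prod.fst_add, Prod.snd_add, Prod.mk_add_mk, neg_add, add_sub_add_comm]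

lemma mulOmega_apply (p : ℤ × ℤ) : mulOmega p = (-p.2, p.1 - p.2) := rfl

lemma mulOmega_mulOmega_mulOmega (p : ℤ × ℤ) : mulOmega (mulOmega (mulOmega p)) = p := by
  simp only [mulOmega_apply, Prod.ext_iff]
  constructor <;> ring

def omegaPow (k : ℕ) : ℤ × ℤ := mulOmega^[k] (1, 0)

lemma omegaPow_succ (k : ℕ) : omegaPow (k + 1) = mulOmega (omegaPow k) :=
  Function.iterate_succ_apply' _ _ _

lemma omegaPow_mod_three (k : ℕ) : omegaPow (k % 3) = omegaPow k :=
  Function.IsPeriodicPt.iterate_mod_apply (n := 3) (mulOmega_mulOmega_mulOmega _) k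

/-- The six units `±1, ±ω, ±ω²` of `ℤ[ω]`, together with `0`. -/
def unitsAndZero : List (ℤ × ℤ) := [0, (1, 0), (0, 1), (-1, -1), (-1, 0), (0, -1), (1, 1)]

lemma abs_le_one_of_mem_unitsAndZero :
    ∀ p ∈ unitsAndZero, |p.1| ≤ 1 ∧ |p.2| ≤ 1 ∧ |p.1 - p.2| ≤ 1 := by
  decide

/-- The pairs `(weight x, shiftedWeight m x)` that actually occur. -/
def Admissible (a d : ℤ × ℤ) : Prop :=
  a ∈ unitsAndZero ∧ d ∈ unitsAndZero ∧ (a = 0 ∨ d = 0 ∨ d = -a ∨ d = mulOmega a)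

instance (a d : ℤ × ℤ) : Decidable (Admissible a d) := by
  unfold Admissible; infer_instance

lemma Admissible.mulOmega_self {a d : ℤ × ℤ} (h : Admissible a d) : Admissible a (mulOmega a) := by
  have key : ∀ a ∈ unitsAndZero, Admissible a (mulOmega a) := by decide
  exact key a h.1

lemma Admissible.mulOmega_add {a d : ℤ × ℤ} (h : Admissible a d) :
    Admissible a (mulOmega a + mulOmega d) := by
  have key : ∀ a ∈ unitsAndZero, ∀ d ∈ unitsAndZero, Admissible a d →
      Admissible a (mulOmega a + mulOmega d) := by decide
  exact key a h.1 d h.2.1 h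

lemma Admissible.step {a d : ℤ × ℤ} (h : Admissible a d) :
    Admissible (mulOmega a + mulOmega d) (mulOmega (mulOmega d)) := by
  have key : ∀ a ∈ unitsAndZero, ∀ d ∈ unitsAndZero, Admissible a d →
      Admissible (mulOmega a + mulOmega d) (mulOmega (mulOmega d)) := by decide
  exact key a h.1 d h.2.1 h

lemma fibW_add_three (m : ℕ) : fibW (m + 3) = fibW (m + 2) + fibW (m + 1) := rfl

lemma fibW_eq_fib : ∀ {k : ℕ}, k ≠ 0 → fibW k = fib (k + 1)
  | 1, _ => rfl
  | 2, _ => rfl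
  | k + 3, _ => by
    rw [fibW_add_three, fibW_eq_fib k.succ_ne_zero, fibW_eq_fib (k + 1).succ_ne_zero,
      fib_add_two (n := k + 2), add_comm]

lemma fibW_mono : Monotone fibW := by
  refine monotone_nat_of_le_succ fun k => ?_
  rcases k with _ | _ | k
  · decide
  · decide
  · exact Nat.le_add_right _ _

lemma le_fibW (k : ℕ) : k ≤ fibW k := by
  rcases k with _ | k
  · exact le_rfl
  · have := le_fib_add_one (k + 1 + 1)
    rw [fibW_eq_fib (by omega : k + 1 ≠ 0)]
    omega

lemma sum_fibW_Icc (m : ℕ) : ∑ j ∈ Icc 1 m, fibW j + 2 = fibW (m + 2) := by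
  induction m with
  | zero => rfl
  | succ m ih =>
    rw [← insert_Icc_right_eq_Icc_add_one (by omega), sum_insert (by simp), fibW_add_three]
    omega

lemma exists_fibW_le_lt {x : ℕ} (hx : x ≠ 0) : ∃ k, fibW (k + 1) ≤ x ∧ x < fibW (k + 2) := by
  have h2 : 2 ≤ greatestFib x := le_greatestFib.2 (by rw [fib_two]; omega)
  refine ⟨greatestFib x - 2, ?_, ?_⟩
  · rw [fibW_eq_fib (by omega), show greatestFib x - 2 + 1 + 1 = greatestFib x by omega]
    exact fib_greatestFib_le x
  · rw [fibW_eq_fib (by omega), show greatestFib x - 2 + 2 + 1 = greatestFib x + 1 by omega]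
    exact lt_fib_greatestFib_add_one x

/-- `∑ ω ^ #S` over the Fibonacci partitions `S` of `x` with all parts among `f₁, …, fₘ`. -/
def partWeight (m x : ℕ) : ℤ × ℤ :=
  ∑ S ∈ (Icc 1 m).powerset with ∑ j ∈ S, fibW j = x, omegaPow #S

def weight (x : ℕ) : ℤ × ℤ := partWeight x x

lemma partWeight_succ (m x : ℕ) : partWeight (m + 1) x = partWeight m x +
    ∑ S ∈ (Icc 1 m).powerset with fibW (m + 1) + ∑ j ∈ S, fibW j = x, mulOmega (omegaPow #S) := by
  simp only [partWeight, sum_filter]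
  rw [← insert_Icc_right_eq_Icc_add_one (by omega), sum_powerset_insert (by simp)]
  congr 1
  refine sum_congr rfl fun S hS => ?_
  have hm : m + 1 ∉ S := fun h => by simpa using mem_powerset.1 hS h
  rw [sum_insert hm, card_insert_of_notMem hm, omegaPow_succ]

lemma partWeight_succ_of_lt {m x : ℕ} (h : x < fibW (m + 1)) :
    partWeight (m + 1) x = partWeight m x := by
  rw [partWeight_succ, add_eq_left, sum_eq_zero]
  intro S hS
  have := (mem_filter.1 hS).2
  omega

lemma partWeight_succ_add (m y : ℕ) : partWeight (m + 1) (y + fibW (m + 1)) =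
    partWeight m (y + fibW (m + 1)) + mulOmega (partWeight m y) := by
  rw [partWeight_succ]
  congr 1
  rw [partWeight, map_sum]
  refine sum_congr (filter_congr fun S _ => ?_) fun _ _ => rfl
  omega

lemma partWeight_eq_zero {m x : ℕ} (h : fibW (m + 2) < x + 2) : partWeight m x = 0 := by
  refine sum_eq_zero fun S hS => absurd (mem_filter.1 hS).2 ?_
  have := sum_le_sum_of_subset (f := fibW) (mem_powerset.1 (mem_filter.1 hS).1)
  have := sum_fibW_Icc m
  omega

lemma partWeight_succ_add_of_lt {m y : ℕ} (h : fibW (m + 2) < y + fibW (m + 1) + 2) :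
    partWeight (m + 1) (y + fibW (m + 1)) = mulOmega (partWeight m y) := by
  rw [partWeight_succ_add, partWeight_eq_zero h, zero_add]

lemma partWeight_add_of_lt {m x : ℕ} (h : x < fibW (m + 1)) (k : ℕ) :
    partWeight (m + k) x = partWeight m x := by
  induction k with
  | zero => rfl
  | succ k ih =>
    rw [← add_assoc, partWeight_succ_of_lt (h.trans_le (fibW_mono (by omega))), ih]

lemma partWeight_eq_weight {m x : ℕ} (h : x < fibW (m + 1)) : partWeight m x = weight x := by
  have hx : x < fibW (x + 1) := (le_fibW (x + 1)).trans_lt' x.lt_succ_self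
  rw [weight, ← partWeight_add_of_lt h x, ← partWeight_add_of_lt hx m, add_comm]

def shiftedWeight (m y : ℕ) : ℤ × ℤ := partWeight m (y + fibW m)

lemma partWeight_add_fibW_add_three (m y : ℕ) :
    partWeight (m + 2) (y + fibW (m + 3)) = mulOmega (shiftedWeight (m + 1) y) := by
  rw [fibW_add_three, ← add_assoc, add_right_comm,
    partWeight_succ_add_of_lt (by grind [fibW_add_three]), shiftedWeight]

lemma shiftedWeight_add_three (m y : ℕ) : shiftedWeight (m + 3) y =
    mulOmega (partWeight (m + 2) y) + mulOmega (shiftedWeight (m + 1) y) := by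
  rw [shiftedWeight, partWeight_succ_add, partWeight_add_fibW_add_three, add_comm]

lemma shiftedWeight_add_two {m y : ℕ} (h : fibW (m + 1) ≤ y + 1) :
    shiftedWeight (m + 2) y = mulOmega (partWeight (m + 1) y) := by
  rcases m with _ | m
  · exact partWeight_succ_add_of_lt (by simp [fibW])
  · exact partWeight_succ_add_of_lt (by grind [fibW_add_three])

lemma weight_add_fibW {m y : ℕ} (hy : y < fibW (m + 2)) : weight (y + fibW (m + 3)) =
    mulOmega (weight y) + mulOmega (shiftedWeight (m + 1) y) := by
  have hx : y + fibW (m + 3) < fibW (m + 4) := by grind [fibW_add_three]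
  rw [← partWeight_eq_weight hx, ← shiftedWeight, shiftedWeight_add_three,
    partWeight_eq_weight (hy.trans_le (fibW_mono (by omega)))]

lemma shiftedWeight_add_fibW (m y : ℕ) : shiftedWeight (m + 3) (y + fibW (m + 3)) =
    mulOmega (mulOmega (shiftedWeight (m + 1) y)) := by
  rw [shiftedWeight_add_two (by grind [fibW_add_three]), partWeight_add_fibW_add_three]

/-- For `m ≥ k` the values `u m = shiftedWeight (m + 1) x` obey
`u (m + 2) = ω (weight x) + ω u m`. -/
lemma admissible_shiftedWeight_of_le {x k : ℕ} (hkx : fibW (k + 1) ≤ x + 1)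
    (hxk : x < fibW (k + 2)) (h : Admissible (weight x) (shiftedWeight (k + 1) x)) :
    ∀ m ≥ k, Admissible (weight x) (shiftedWeight (m + 1) x) := by
  suffices ∀ m ≥ k, Admissible (weight x) (shiftedWeight (m + 1) x) ∧
      Admissible (weight x) (shiftedWeight (m + 2) x) from fun m hm => (this m hm).1
  refine Nat.le_induction ⟨h, ?_⟩ fun m hkm ih => ⟨ih.2, ?_⟩
  · rw [shiftedWeight_add_two hkx, partWeight_eq_weight hxk]
    exact h.mulOmega_self
  · rw [shiftedWeight_add_three, partWeight_eq_weight (hxk.trans_le (fibW_mono (by omega)))]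
    exact ih.1.mulOmega_add

theorem admissible_weight_shiftedWeight (x : ℕ) :
    ∀ m, x < fibW (m + 2) → Admissible (weight x) (shiftedWeight (m + 1) x) := by
  induction x using Nat.strong_induction_on with
  | _ x ih =>
  rcases eq_or_ne x 0 with rfl | hx
  · exact fun m _ => admissible_shiftedWeight_of_le le_rfl (by decide) (by decide +kernel) m
      (Nat.zero_le m)
  obtain ⟨k, hkx, hxk⟩ := exists_fibW_le_lt hx
  refine fun m hxm => admissible_shiftedWeight_of_le (by omega) hxk ?_ m
    (by have := fibW_mono.reflect_lt (hkx.trans_lt hxm); omega)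
  rcases k with _ | _ | j
  · obtain rfl : x = 1 := by simp only [fibW] at hkx hxk; omega
    decide +kernel
  · obtain rfl : x = 2 := by simp only [fibW] at hkx hxk; omega
    decide +kernel
  · change fibW (j + 3) ≤ x at hkx
    obtain ⟨y, rfl⟩ := Nat.exists_eq_add_of_le' hkx
    have hy : y < fibW (j + 2) := by grind [fibW_add_three]
    rw [weight_add_fibW hy, shiftedWeight_add_fibW]
    exact (ih y (by have := le_fibW (j + 3); omega) j hy).step

lemma r_eq_card (d i n : ℕ) :
    r d i n = #{S ∈ {S ∈ (Icc 1 n).powerset | ∑ j ∈ S, fibW j = n} | #S % d = i} := by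
  rw [r, ← Nat.card_eq_finsetCard]
  refine Nat.card_congr (Equiv.subtypeEquivRight fun S => ?_)
  simp only [mem_filter, mem_powerset, subset_iff, mem_Icc, and_assoc]
  refine ⟨fun ⟨h1, h2, h3⟩ => ⟨fun j hj => ⟨h1 j hj, ?_⟩, h2, h3⟩,
    fun ⟨h1, h2, h3⟩ => ⟨fun j hj => (h1 hj).1, h2, h3⟩⟩
  calc j ≤ fibW j := le_fibW j
    _ ≤ ∑ k ∈ S, fibW k := single_le_sum (fun _ _ => Nat.zero_le _) hj
    _ = n := h2

/-- Since `1 + ω + ω² = 0`, `weight n = r₀ + r₁ ω + r₂ ω²` has coordinates `(r₀ - r₂, r₁ - r₂)`. -/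
lemma weight_eq (n : ℕ) : weight n = ((r 3 0 n : ℤ) - r 3 2 n, (r 3 1 n : ℤ) - r 3 2 n) := by
  rw [weight, partWeight, ← sum_fiberwise_of_maps_to (g := fun S => #S % 3) (t := range 3)
    fun S _ => mem_range.2 (Nat.mod_lt _ (by norm_num))]
  have hfiber (k : ℕ) : ∑ S ∈ {S ∈ (Icc 1 n).powerset | ∑ j ∈ S, fibW j = n} with #S % 3 = k,
      omegaPow #S = r 3 k n • omegaPow k := by
    rw [r_eq_card, ← sum_const]
    exact sum_congr rfl fun S hS => by rw [← omegaPow_mod_three, (mem_filter.1 hS).2]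
  simp only [sum_range_succ, sum_range_zero, zero_add, hfiber]
  simp only [show omegaPow 0 = (1, 0) from rfl, show omegaPow 1 = (0, 1) from rfl,
    show omegaPow 2 = (-1, -1) from rfl, Prod.smul_mk, Prod.mk_add_mk, nsmul_eq_mul]
  exact Prod.ext (by ring) (by ring)

lemma abs_sub_le_one_of_mem_unitsAndZero {c : ℕ → ℤ} (h : (c 0 - c 2, c 1 - c 2) ∈ unitsAndZero)
    {i j : ℕ} (hi : i < 3) (hj : j < 3) : |c i - c j| ≤ 1 := by
  obtain ⟨h₁, h₂, h₃⟩ := abs_le_one_of_mem_unitsAndZero _ h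
  simp only [abs_le] at *
  interval_cases i <;> interval_cases j <;> omega

theorem shallit_bound_general (n : ℕ) (i j : ℕ) (hi : i < 3) (hj : j < 3) :
    |(r 3 i n : ℤ) - (r 3 j n : ℤ)| ≤ 1 := by
  have h := (admissible_weight_shiftedWeight n n ((le_fibW _).trans_lt' (by omega))).1
  rw [weight_eq] at h
  exact abs_sub_le_one_of_mem_unitsAndZero (c := fun k => (r 3 k n : ℤ)) h hi hj

theorem shallit_bound (n : ℕ) (hn : 0 < n) (i j : ℕ) (hi : i < 3) (hj : j < 3) :
    |(r 3 i n : ℤ) - (r 3 j n : ℤ)| ≤ 1 :=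
  shallit_bound_general n i j hi hj
end

section
/- For every positive integer n, |r_{2,0}(n) − r_{2,1}(n)| ≤ 1, where r_{2,i}(n) is the number of partitions of n into distinct Fibonacci numbers with number of parts ≡ i (mod 2). -/
lemma fibW_add (m : ℕ) : fibW (m+3) = fibW (m+2) + fibW (m+1) := rfl

lemma one_le_fibW : ∀ m, 1 ≤ m → 1 ≤ fibW m
  | 1, _ => le_refl 1
  | 2, _ => by norm_num [fibW]
  | (n+3), _ => by
      have := one_le_fibW (n+2) (by omega)
      rw [fibW_add]; omega

lemma fibW_le_succ : ∀ m, fibW m ≤ fibW (m+1)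
  | 0 => by norm_num [fibW]
  | 1 => by norm_num [fibW]
  | (n+2) => by rw [fibW_add]; omega

lemma fibW_mono_s13 {a b : ℕ} (h : a ≤ b) : fibW a ≤ fibW b := by
  induction b with
  | zero => simpa [Nat.le_zero.mp h]
  | succ b ih =>
    rcases Nat.lt_or_ge a (b+1) with h'|h'
    · exact le_trans (ih (by omega)) (fibW_le_succ b)
    · have : a = b + 1 := by omega
      simp [this]

lemma le_fibW_s13 : ∀ m, 1 ≤ m → m ≤ fibW m
  | 1, _ => le_refl 1
  | 2, _ => by norm_num [fibW]
  | (n+3), _ => by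
      have h1 := le_fibW_s13 (n+2) (by omega)
      have h2 := one_le_fibW (n+1) (by omega)
      rw [fibW_add]; omega

lemma two_le_fibW {m : ℕ} (h : 2 ≤ m) : 2 ≤ fibW m :=
  le_trans (by norm_num [fibW] : 2 ≤ fibW 2) (fibW_mono_s13 h)

/-- `Sm m = ∑_{j=1}^m fibW j = fibW (m+2) - 2`. -/
def Sm (m : ℕ) : ℕ := fibW (m+2) - 2

lemma Sm_succ (m : ℕ) : Sm (m+1) = Sm m + fibW (m+1) := by
  have h2 : 2 ≤ fibW (m+2) := two_le_fibW (by omega)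
  have h3 : fibW (m+1+2) = fibW (m+2) + fibW (m+1) := fibW_add m
  unfold Sm; omega

/-- Coefficients of `∏_{j=1}^m (1 - x^{fibW j})`. -/
def cc : ℕ → ℕ → ℤ
  | 0, n => if n = 0 then 1 else 0
  | (m+1), n => cc m n - (if fibW (m+1) ≤ n then cc m (n - fibW (m+1)) else 0)

lemma cc_vanish : ∀ m n, Sm m < n → cc m n = 0
  | 0, n, h => by
    have : n ≠ 0 := by unfold Sm at h; simp [fibW] at h; omega
    simp [cc, this]
  | (m+1), n, h => by
    have hSs := Sm_succ m
    have h1 : cc m n = 0 := cc_vanish m n (by omega)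
    rcases le_or_gt (fibW (m+1)) n with hle|hlt
    · have h2 : cc m (n - fibW (m+1)) = 0 := cc_vanish m _ (by omega)
      simp [cc, h1, hle, h2]
    · simp [cc, h1, not_le.mpr hlt]

lemma cc_symm : ∀ m, ∀ n ≤ Sm m, cc m (Sm m - n) = (-1)^m * cc m n
  | 0, n, h => by
    have h0 : Sm 0 = 0 := rfl
    have : n = 0 := by omega
    simp [this, h0]
  | (m+1), n, hn => by
    have hSs := Sm_succ m
    set g := fibW (m+1) with hg
    have hg1 : 1 ≤ g := one_le_fibW _ (by omega)
    rcases lt_or_ge n g with hlt|hge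
    · -- n < g
      have hv : cc m (Sm (m+1) - n) = 0 := cc_vanish m _ (by omega)
      have hnn : ¬ g ≤ n := by omega
      rcases le_or_gt n (Sm m) with h1|h1
      · have hgle : g ≤ Sm (m+1) - n := by omega
        have he : Sm (m+1) - n - g = Sm m - n := by omega
        simp only [cc, ← hg, if_pos hgle, if_neg hnn, hv, he, cc_symm m n h1]
        rw [pow_succ]; ring
      · have hgle : ¬ g ≤ Sm (m+1) - n := by omega
        have hz : cc m n = 0 := cc_vanish m n h1
        simp only [cc, ← hg, if_neg hgle, if_neg hnn, hv, hz]
        ring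
    · -- g ≤ n
      have h2 : n - g ≤ Sm m := by omega
      have e1 : cc m (Sm (m+1) - n) = (-1)^m * cc m (n - g) := by
        have h1 : Sm (m+1) - n = Sm m - (n - g) := by omega
        rw [h1]; exact cc_symm m _ h2
      rcases le_or_gt n (Sm m) with h3|h3
      · have hgle : g ≤ Sm (m+1) - n := by omega
        have e2 : Sm (m+1) - n - g = Sm m - n := by omega
        simp only [cc, ← hg, if_pos hgle, if_pos hge, e1, e2, cc_symm m n h3]
        rw [pow_succ]; ring
      · have hz := cc_vanish m n h3
        have hng : ¬ g ≤ Sm (m+1) - n := by omega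
        simp only [cc, ← hg, if_neg hng, if_pos hge, e1, hz]
        rw [pow_succ]; ring

lemma cc_succ (m n : ℕ) : cc (m+1) n = cc m n - (if fibW (m+1) ≤ n then cc m (n - fibW (m+1)) else 0) := rfl

lemma cc_symm' (m n : ℕ) (h : n ≤ Sm m) : cc m n = (-1)^m * cc m (Sm m - n) := by
  rw [cc_symm m n h, ← mul_assoc, ← mul_pow]
  norm_num

lemma cc_bound_base : ∀ k ≤ 3, ∀ n, |cc k n| ≤ 1 := by
  intro k hk n
  rcases le_or_gt n 6 with h|h
  · interval_cases k <;> interval_cases n <;> decide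
  · have hs : Sm k ≤ 6 := by interval_cases k <;> decide
    rw [cc_vanish k n (by omega)]
    norm_num

lemma cc_bound : ∀ m n, |cc m n| ≤ 1 := by
  intro m
  induction m using Nat.strong_induction_on with
  | _ m ih =>
    match m with
    | 0 => exact cc_bound_base 0 (by omega)
    | 1 => exact cc_bound_base 1 (by omega)
    | 2 => exact cc_bound_base 2 (by omega)
    | 3 => exact cc_bound_base 3 (by omega)
    | (t+4) =>
      intro n
      have ih3 := ih (t+3) (by omega)
      have ih1 := ih (t+1) (by omega)
      have e4 : cc (t+4) n = cc (t+3) n - (if fibW (t+4) ≤ n then cc (t+3) (n - fibW (t+4)) else 0) :=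
        cc_succ (t+3) n
      rcases lt_or_ge n (fibW (t+4)) with hlt|hge
      · rw [e4, if_neg (by omega), sub_zero]; exact ih3 n
      · rw [e4, if_pos hge]
        have hSa : Sm (t+3) = Sm (t+2) + fibW (t+3) := Sm_succ (t+2)
        have hSb : Sm (t+2) = Sm (t+1) + fibW (t+2) := Sm_succ (t+1)
        have hSc : fibW (t+4) = fibW (t+3) + fibW (t+2) := fibW_add (t+1)
        have hSd : fibW (t+3) = fibW (t+2) + fibW (t+1) := fibW_add t
        have hSe : Sm (t+1) = fibW (t+3) - 2 := rfl
        have h2f : 2 ≤ fibW (t+3) := two_le_fibW (by omega)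
        have h2g : 2 ≤ fibW (t+2) := two_le_fibW (by omega)
        have h1h : 1 ≤ fibW (t+1) := one_le_fibW _ (by omega)
        rcases lt_or_ge (Sm (t+3)) n with hbig|hle2
        · rw [cc_vanish (t+3) n hbig, zero_sub, abs_neg]
          exact ih3 _
        · -- overlap region
          set a := Sm (t+3) - n with ha
          set b := n - fibW (t+4) with hb
          have hab : a + b = Sm (t+1) := by omega
          have e0 : cc (t+3) n = (-1)^(t+3) * cc (t+3) a := cc_symm' (t+3) n hle2
          have hmon : fibW (t+1) ≤ fibW (t+2) := fibW_le_succ (t+1)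
          have ea3 : cc (t+3) a = cc (t+2) a := by
            have h : cc (t+3) a = cc (t+2) a - (if fibW (t+3) ≤ a then cc (t+2) (a - fibW (t+3)) else 0) :=
              cc_succ (t+2) a
            rw [h, if_neg (by omega), sub_zero]
          have eb3 : cc (t+3) b = cc (t+2) b := by
            have h : cc (t+3) b = cc (t+2) b - (if fibW (t+3) ≤ b then cc (t+2) (b - fibW (t+3)) else 0) :=
              cc_succ (t+2) b
            rw [h, if_neg (by omega), sub_zero]
          have ea2 : cc (t+2) a = cc (t+1) a - (if fibW (t+2) ≤ a then cc (t+1) (a - fibW (t+2)) else 0) :=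
            cc_succ (t+1) a
          have eb2 : cc (t+2) b = cc (t+1) b - (if fibW (t+2) ≤ b then cc (t+1) (b - fibW (t+2)) else 0) :=
            cc_succ (t+1) b
          have hrel : cc (t+1) b = (-1)^(t+1) * cc (t+1) a := by
            have := cc_symm (t+1) a (by omega)
            rwa [show Sm (t+1) - a = b from by omega] at this
          have hpow : ((-1 : ℤ))^(t+3) = (-1)^(t+1) := by
            rw [show t+3 = (t+1)+2 from rfl, pow_add]; norm_num
          have hnotboth : ¬ (fibW (t+2) ≤ a ∧ fibW (t+2) ≤ b) := by omega
          rcases le_or_gt (fibW (t+2)) a with hA|hA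
          · have hB : ¬ fibW (t+2) ≤ b := fun hB => hnotboth ⟨hA, hB⟩
            have key : cc (t+3) n - cc (t+3) b = -((-1)^(t+1) * cc (t+1) (a - fibW (t+2))) := by
              rw [e0, ea3, eb3, ea2, eb2, if_pos hA, if_neg hB, hrel, hpow]
              ring
            rw [key, abs_neg, abs_mul, abs_pow, abs_neg, abs_one, one_pow, one_mul]
            exact ih1 _
          · rcases le_or_gt (fibW (t+2)) b with hB|hB
            · have key : cc (t+3) n - cc (t+3) b = cc (t+1) (b - fibW (t+2)) := by
                rw [e0, ea3, eb3, ea2, eb2, if_pos hB, if_neg (by omega), hrel, hpow]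
                ring
              rw [key]
              exact ih1 _
            · have key : cc (t+3) n - cc (t+3) b = 0 := by
                rw [e0, ea3, eb3, ea2, eb2, if_neg (by omega), if_neg (by omega), hrel, hpow]
                ring
              rw [key]
              norm_num

open Finset in
noncomputable def gsum (m n : ℕ) : ℤ :=
  ∑ S ∈ (Finset.Icc 1 m).powerset, (if (∑ j ∈ S, fibW j) = n then (-1 : ℤ)^S.card else 0)

lemma Icc_one_succ (m : ℕ) : Finset.Icc 1 (m+1) = insert (m+1) (Finset.Icc 1 m) := by
  ext x; simp [Finset.mem_Icc, Finset.mem_insert]; omega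

lemma gsum_eq_cc (m n : ℕ) : gsum m n = cc m n := by
  induction m generalizing n with
  | zero =>
    simp only [gsum, cc]
    rw [show Finset.Icc 1 0 = (∅ : Finset ℕ) from rfl]
    simp [eq_comm]
  | succ m ihm =>
    have hnot : (m+1) ∉ Finset.Icc 1 m := by simp
    rw [gsum, Icc_one_succ, Finset.sum_powerset_insert hnot]
    have hterm : ∀ S ∈ (Finset.Icc 1 m).powerset,
        (if (∑ j ∈ insert (m+1) S, fibW j) = n then (-1 : ℤ)^(insert (m+1) S).card else 0)
        = -(if fibW (m+1) ≤ n ∧ (∑ j ∈ S, fibW j) = n - fibW (m+1) then (-1 : ℤ)^S.card else 0) := by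
      intro S hS
      have hSm : (m+1) ∉ S := fun h => hnot (Finset.mem_powerset.mp hS h)
      rw [Finset.sum_insert hSm, Finset.card_insert_of_notMem hSm]
      by_cases hc : fibW (m+1) + ∑ j ∈ S, fibW j = n
      · rw [if_pos hc, if_pos ⟨by omega, by omega⟩, pow_succ]
        ring
      · rw [if_neg hc, if_neg (by omega)]
        ring
    rw [Finset.sum_congr rfl hterm, Finset.sum_neg_distrib]
    by_cases hle : fibW (m+1) ≤ n
    · have : ∀ S : Finset ℕ,
          (fibW (m+1) ≤ n ∧ (∑ j ∈ S, fibW j) = n - fibW (m+1)) ↔ ((∑ j ∈ S, fibW j) = n - fibW (m+1)) := by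
        intro S; constructor
        · exact fun h => h.2
        · exact fun h => ⟨hle, h⟩
      simp only [this]
      rw [cc_succ, if_pos hle, ← ihm, ← ihm, gsum, gsum, sub_eq_add_neg]
    · have : ∀ S : Finset ℕ,
          (if fibW (m+1) ≤ n ∧ (∑ j ∈ S, fibW j) = n - fibW (m+1) then (-1 : ℤ)^S.card else 0) = 0 := by
        intro S; rw [if_neg (by tauto)]
      simp only [this]
      rw [cc_succ, if_neg hle, ← ihm, gsum]
      simp

lemma subset_Icc_of_valid {n : ℕ} {S : Finset ℕ} (h1 : ∀ j ∈ S, 1 ≤ j)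
    (h2 : (∑ j ∈ S, fibW j) = n) : S ⊆ Finset.Icc 1 n := by
  intro j hj
  have hj1 := h1 j hj
  have hle : fibW j ≤ n := h2 ▸ Finset.single_le_sum (fun i _ => Nat.zero_le _) hj
  have := le_fibW_s13 j hj1
  simp only [Finset.mem_Icc]; omega

lemma r_eq (i n : ℕ) :
    (r 2 i n) = (((Finset.Icc 1 n).powerset.filter
      (fun S => (∑ j ∈ S, fibW j) = n ∧ S.card % 2 = i))).card := by
  rw [r]
  have hset : {S : Finset ℕ | (∀ j ∈ S, 1 ≤ j) ∧ (∑ j ∈ S, fibW j) = n ∧ S.card % 2 = i}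
      = ↑((Finset.Icc 1 n).powerset.filter (fun S => (∑ j ∈ S, fibW j) = n ∧ S.card % 2 = i)) := by
    ext S
    simp only [Set.mem_setOf_eq, Finset.coe_filter, Finset.mem_powerset]
    constructor
    · rintro ⟨h1, h2, h3⟩; exact ⟨subset_Icc_of_valid h1 h2, h2, h3⟩
    · rintro ⟨hsub, h2, h3⟩
      exact ⟨fun j hj => (Finset.mem_Icc.mp (hsub hj)).1, h2, h3⟩
  calc Nat.card {S : Finset ℕ // (∀ j ∈ S, 1 ≤ j) ∧ (∑ j ∈ S, fibW j) = n ∧ S.card % 2 = i}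
      = Set.ncard {S : Finset ℕ | (∀ j ∈ S, 1 ≤ j) ∧ (∑ j ∈ S, fibW j) = n ∧ S.card % 2 = i} :=
        Nat.card_coe_set_eq _
    _ = _ := by rw [hset, Set.ncard_coe_finset]

theorem parity_bound (n : ℕ) (hn : 0 < n) :
    |(r 2 0 n : ℤ) - (r 2 1 n : ℤ)| ≤ 1 := by
  have hb := cc_bound n n
  rw [← gsum_eq_cc] at hb
  have key : (r 2 0 n : ℤ) - (r 2 1 n : ℤ) = gsum n n := by
    classical
    rw [r_eq 0 n, r_eq 1 n]
    set P := (Finset.Icc 1 n).powerset.filter (fun S => (∑ j ∈ S, fibW j) = n) with hP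
    have hsplit : (∑ S ∈ P.filter (fun S => S.card % 2 = 0), (-1:ℤ)^S.card)
        + (∑ S ∈ P.filter (fun S => ¬ S.card % 2 = 0), (-1:ℤ)^S.card)
        = ∑ S ∈ P, (-1:ℤ)^S.card :=
      Finset.sum_filter_add_sum_filter_not P _ _
    have e0 : ∑ S ∈ P.filter (fun S => S.card % 2 = 0), (-1:ℤ)^S.card
        = ((P.filter (fun S => S.card % 2 = 0)).card : ℤ) := by
      have h : ∀ S ∈ P.filter (fun S => S.card % 2 = 0), (-1:ℤ)^S.card = 1 := by
        intro S hS
        exact Even.neg_one_pow (Nat.even_iff.mpr (Finset.mem_filter.mp hS).2)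
      rw [Finset.sum_congr rfl h, Finset.sum_const, nsmul_eq_mul, mul_one]
    have e1 : ∑ S ∈ P.filter (fun S => ¬ S.card % 2 = 0), (-1:ℤ)^S.card
        = -((P.filter (fun S => ¬ S.card % 2 = 0)).card : ℤ) := by
      have h : ∀ S ∈ P.filter (fun S => ¬ S.card % 2 = 0), (-1:ℤ)^S.card = -1 := by
        intro S hS
        have := (Finset.mem_filter.mp hS).2
        exact Odd.neg_one_pow (Nat.odd_iff.mpr (by omega))
      rw [Finset.sum_congr rfl h, Finset.sum_const, nsmul_eq_mul, mul_neg_one]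
    have c0 : P.filter (fun S => S.card % 2 = 0)
        = (Finset.Icc 1 n).powerset.filter (fun S => (∑ j ∈ S, fibW j) = n ∧ S.card % 2 = 0) := by
      rw [hP, Finset.filter_filter]
    have c1 : P.filter (fun S => ¬ S.card % 2 = 0)
        = (Finset.Icc 1 n).powerset.filter (fun S => (∑ j ∈ S, fibW j) = n ∧ S.card % 2 = 1) := by
      rw [hP, Finset.filter_filter]
      apply Finset.filter_congr
      intro S _
      constructor
      · rintro ⟨h1, h2⟩; exact ⟨h1, by omega⟩
      · rintro ⟨h1, h2⟩; exact ⟨h1, by omega⟩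
    have hg : gsum n n = ∑ S ∈ P, (-1:ℤ)^S.card := (Finset.sum_filter _ _).symm
    rw [hg, ← hsplit, ← c0, ← c1] at *
    rw [e0, e1]
    ring
  rw [key]; exact hb
end

section
/- In the formal power series ring Z[[x]], the infinite product ∏_{i=1}^{∞} (1 − x^{f_i}) over all Fibonacci numbers f_1 = 1, f_2 = 2, f_3 = 3, f_4 = 5, ... has all coefficients in {−1, 0, 1}. -/
open Polynomial

/-- The finite partial product. -/
noncomputable def fibP (m : ℕ) : Polynomial ℤ :=
  ∏ i ∈ Finset.Icc 1 m, (1 - Polynomial.X ^ fibW i)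

lemma fibW_succ (n : ℕ) : fibW (n + 3) = fibW (n + 2) + fibW (n + 1) := rfl

lemma fibW_pos (n : ℕ) : 0 < fibW (n + 1) := by
  induction n using Nat.strong_induction_on with
  | _ n ih =>
    match n with
    | 0 => decide
    | 1 => decide
    | (k + 2) =>
      have := ih k (by omega)
      rw [fibW_succ]; omega

lemma fibW_lt_succ (n : ℕ) : fibW n < fibW (n + 1) := by
  match n with
  | 0 => decide
  | 1 => decide
  | (k + 2) =>
    have := fibW_pos k
    rw [fibW_succ]; omega

lemma fibW_mono_s14 {k m : ℕ} (h : k ≤ m) : fibW k ≤ fibW m := by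
  induction h with
  | refl => exact le_rfl
  | step _ ih => exact ih.trans (fibW_lt_succ _).le

lemma fibW_le_two_mul (j : ℕ) : fibW (j + 2) ≤ 2 * fibW (j + 1) := by
  match j with
  | 0 => decide
  | (k + 1) =>
    show fibW (k + 3) ≤ 2 * fibW (k + 2)
    rw [fibW_succ]
    have := fibW_mono_s14 (show k + 1 ≤ k + 2 by omega)
    omega

lemma fibP_zero : fibP 0 = 1 := by simp [fibP]

lemma fibP_succ (m : ℕ) : fibP (m + 1) = fibP m * (1 - X ^ fibW (m + 1)) := by
  rw [fibP, Finset.prod_Icc_succ_top (by omega : 1 ≤ m + 1), ← fibP]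

lemma factor_natDegree (f : ℕ) : (1 - (X : ℤ[X]) ^ f).natDegree = f := by
  rw [show (1 - (X : ℤ[X]) ^ f) = -(X ^ f - C 1) by rw [map_one]; ring, natDegree_neg,
    natDegree_X_pow_sub_C]

lemma factor_ne_zero {f : ℕ} (hf : 0 < f) : (1 - (X : ℤ[X]) ^ f) ≠ 0 := by
  intro h
  have h0 := congrArg (fun p => Polynomial.coeff p 0) h
  simp [coeff_X_pow, hf.ne] at h0

lemma fibP_ne_zero (m : ℕ) : fibP m ≠ 0 := by
  induction m with
  | zero => rw [fibP_zero]; exact one_ne_zero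
  | succ m ih =>
    rw [fibP_succ]
    exact mul_ne_zero ih (factor_ne_zero (fibW_pos m))

lemma fibP_natDegree (m : ℕ) : (fibP m).natDegree + 2 = fibW (m + 2) := by
  induction m with
  | zero => rw [fibP_zero]; simp; rfl
  | succ m ih =>
    rw [fibP_succ, natDegree_mul (fibP_ne_zero m) (factor_ne_zero (fibW_pos m)),
      factor_natDegree, show m + 1 + 2 = m + 3 by omega, fibW_succ]
    omega

lemma factor_reverse (f : ℕ) : (1 - (X : ℤ[X]) ^ f).reverse = X ^ f - 1 := by
  rw [Polynomial.reverse, factor_natDegree,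
    show (1 - (X : ℤ[X]) ^ f) = X ^ 0 + C (-1) * X ^ f by rw [map_neg, map_one]; ring,
    reflect_add, reflect_monomial, reflect_C_mul_X_pow, revAt_le (Nat.zero_le f),
    show revAt f f = 0 from by rw [revAt_le le_rfl]; omega,
    show (C (-1) : ℤ[X]) = -1 by rw [map_neg, map_one], Nat.sub_zero]
  ring

lemma fibP_reverse (m : ℕ) : (fibP m).reverse = C ((-1 : ℤ) ^ m) * fibP m := by
  induction m with
  | zero => rw [fibP_zero]; simp [Polynomial.reverse]
  | succ m ih =>
    rw [fibP_succ, Polynomial.reverse_mul_of_domain, ih, factor_reverse,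
      show ((X : ℤ[X]) ^ fibW (m + 1) - 1) = C (-1) * (1 - X ^ fibW (m + 1)) by
        rw [map_neg, map_one]; ring,
      pow_succ, map_mul]
    ring

/-- Antipalindromic symmetry of the coefficients. -/
lemma fibP_symm (m n : ℕ) (hn : n ≤ (fibP m).natDegree) :
    (fibP m).coeff ((fibP m).natDegree - n) = (-1 : ℤ) ^ m * (fibP m).coeff n := by
  have h := Polynomial.coeff_reverse (fibP m) n
  rw [fibP_reverse, revAt_le hn, coeff_C_mul] at h
  exact h.symm

/-- The basic recurrence on coefficients. -/
lemma fibP_rec (m n : ℕ) :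
    (fibP (m + 1)).coeff n =
      (fibP m).coeff n -
        if fibW (m + 1) ≤ n then (fibP m).coeff (n - fibW (m + 1)) else 0 := by
  rw [fibP_succ, mul_sub, mul_one, coeff_sub, coeff_mul_X_pow']

/-- Stabilization: coefficients below `f_{k+1}` don't change after stage `k`. -/
lemma fibP_stab : ∀ {m k : ℕ}, k ≤ m → ∀ n, n < fibW (k + 1) →
    (fibP m).coeff n = (fibP k).coeff n := by
  intro m
  induction m with
  | zero =>
    intro k hk n _
    obtain rfl : k = 0 := by omega
    rfl
  | succ m ih =>
    intro k hk n hn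
    rcases Nat.eq_or_lt_of_le hk with rfl | hlt
    · rfl
    · have hg : ¬ fibW (m + 1) ≤ n := by
        have := fibW_mono_s14 (show k + 1 ≤ m + 1 by omega)
        omega
      rw [fibP_rec m n, if_neg hg, sub_zero]
      exact ih (by omega) n hn

lemma abs_neg_one_pow_mul (m : ℕ) (x : ℤ) : |(-1 : ℤ) ^ m * x| = |x| := by
  rw [abs_mul, abs_pow, abs_neg, abs_one, one_pow, one_mul]

/-- Reduction of the generic (low/high/beyond-degree) cases. -/
lemma fibP_aux (m n : ℕ) (ihm : ∀ n, |(fibP m).coeff n| ≤ 1)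
    (hmid : ∀ n, fibW (m + 1) ≤ n → fibW (m + 1) ≤ (fibP (m + 1)).natDegree - n →
      n ≤ (fibP (m + 1)).natDegree → |(fibP (m + 1)).coeff n| ≤ 1) :
    |(fibP (m + 1)).coeff n| ≤ 1 := by
  by_cases hN : n ≤ (fibP (m + 1)).natDegree
  case neg =>
    rw [Polynomial.coeff_eq_zero_of_natDegree_lt (by omega)]; simp
  by_cases hlow : n < fibW (m + 1)
  · rw [fibP_stab (Nat.le_succ m) n hlow]
    exact ihm n
  by_cases hhigh : (fibP (m + 1)).natDegree - n < fibW (m + 1)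
  · have hsym := fibP_symm (m + 1) ((fibP (m + 1)).natDegree - n) (by omega)
    rw [show (fibP (m + 1)).natDegree - ((fibP (m + 1)).natDegree - n) = n by omega] at hsym
    rw [hsym, abs_neg_one_pow_mul, fibP_stab (Nat.le_succ m) _ hhigh]
    exact ihm _
  · exact hmid n (by omega) (by omega) hN

/-- The key result: every coefficient of every partial product lies in `{-1,0,1}`. -/
lemma fibP_bound : ∀ m n : ℕ, |(fibP m).coeff n| ≤ 1 := by
  intro m
  induction m using Nat.strong_induction_on with
  | _ m ih =>
  intro n
  rcases m with _ | m
  · rw [fibP_zero, Polynomial.coeff_one]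
    split <;> simp
  refine fibP_aux m n (fun n => ih m (by omega) n) ?_
  clear n
  intro n hlow hhigh hN
  have hNdeg : (fibP (m + 1)).natDegree + 2 = fibW (m + 3) := fibP_natDegree (m + 1)
  rcases m with _ | _ | j
  · -- m + 1 = 1 : middle range is empty
    exfalso
    have v1 : fibW (0 + 3) = 3 := rfl
    have v2 : fibW (0 + 1) = 1 := rfl
    omega
  · -- m + 1 = 2 : middle range is empty
    exfalso
    have v1 : fibW (0 + 1 + 3) = 5 := rfl
    have v2 : fibW (0 + 1 + 1) = 2 := rfl
    omega
  · -- m + 1 = j + 3 : the genuine middle case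
    -- normalize indices
    have ee : j + 1 + 1 = j + 2 := rfl
    rw [ee] at hlow hhigh hN hNdeg ⊢
    have e1 : fibW (j + 2 + 1) = fibW (j + 3) := rfl
    rw [e1] at hlow hhigh
    have hC : fibW (j + 3) = fibW (j + 2) + fibW (j + 1) := fibW_succ j
    have hD : fibW (j + 4) = fibW (j + 3) + fibW (j + 2) := fibW_succ (j + 1)
    have hE : fibW (j + 5) = fibW (j + 4) + fibW (j + 3) := fibW_succ (j + 2)
    have hA : 0 < fibW (j + 1) := fibW_pos j
    have hB : 0 < fibW (j + 2) := fibW_pos (j + 1)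
    have hBA : fibW (j + 2) ≤ 2 * fibW (j + 1) := fibW_le_two_mul j
    have hN5 : (fibP (j + 2 + 1)).natDegree + 2 = fibW (j + 5) := hNdeg
    have hN1 : (fibP (j + 2)).natDegree + 2 = fibW (j + 4) := fibP_natDegree (j + 2)
    have hN0 : (fibP j).natDegree + 2 = fibW (j + 2) := fibP_natDegree j
    set k := fibW (j + 4) - 2 - n with hk
    have hkb : k ≤ fibW (j + 2) - 2 := by omega
    -- step 1: top-level recurrence
    have hrec : (fibP (j + 2 + 1)).coeff n =
        (fibP (j + 2)).coeff n - (fibP (j + 2)).coeff (n - fibW (j + 3)) := by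
      rw [fibP_rec (j + 2) n, if_pos hlow]
    -- step 2: reflect the first term
    have hsym1 : (fibP (j + 2)).coeff n = (-1 : ℤ) ^ (j + 2) * (fibP (j + 2)).coeff k := by
      have h := fibP_symm (j + 2) k (by omega)
      rw [show (fibP (j + 2)).natDegree - k = n by omega] at h
      exact h
    -- the second index
    have hn2 : n - fibW (j + 3) = fibW (j + 2) - 2 - k := by omega
    -- step 3: lower the level of the second term
    have hstab2 : (fibP (j + 2)).coeff (n - fibW (j + 3)) =
        (fibP (j + 1)).coeff (n - fibW (j + 3)) :=
      fibP_stab (by omega) _ (by show n - fibW (j + 3) < fibW (j + 2); omega)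
    have hsgn : ((-1 : ℤ) ^ (j + 2)) = (-1 : ℤ) ^ j := by ring
    by_cases hka : k < fibW (j + 1)
    · -- Case A
      have hstabk : (fibP (j + 2)).coeff k = (fibP j).coeff k :=
        fibP_stab (by omega) k hka
      have hrec2 : (fibP (j + 1)).coeff (n - fibW (j + 3)) =
          (fibP j).coeff (n - fibW (j + 3)) -
            if fibW (j + 1) ≤ n - fibW (j + 3) then
              (fibP j).coeff (n - fibW (j + 3) - fibW (j + 1)) else 0 :=
        fibP_rec j (n - fibW (j + 3))
      have hsym0 : (fibP j).coeff (n - fibW (j + 3)) = (-1 : ℤ) ^ j * (fibP j).coeff k := by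
        have h := fibP_symm j k (by omega)
        rw [show (fibP j).natDegree - k = n - fibW (j + 3) by omega] at h
        exact h
      rw [hrec, hsym1, hstabk, hstab2, hrec2, hsym0, hsgn]
      rw [show (-1 : ℤ) ^ j * (fibP j).coeff k -
          ((-1 : ℤ) ^ j * (fibP j).coeff k -
            (if fibW (j + 1) ≤ n - fibW (j + 3) then
              (fibP j).coeff (n - fibW (j + 3) - fibW (j + 1)) else 0)) =
          (if fibW (j + 1) ≤ n - fibW (j + 3) then
            (fibP j).coeff (n - fibW (j + 3) - fibW (j + 1)) else 0) by ring]
      split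
      · exact ih j (by omega) _
      · simp
    · -- Case B
      push_neg at hka
      have hstabk : (fibP (j + 2)).coeff k = (fibP (j + 1)).coeff k :=
        fibP_stab (by omega) k (by show k < fibW (j + 2); omega)
      have hreck : (fibP (j + 1)).coeff k =
          (fibP j).coeff k - (fibP j).coeff (k - fibW (j + 1)) := by
        rw [fibP_rec j k, if_pos hka]
      have hstab3 : (fibP (j + 1)).coeff (n - fibW (j + 3)) =
          (fibP j).coeff (n - fibW (j + 3)) :=
        fibP_stab (by omega) _ (by omega)
      have hsym0 : (fibP j).coeff (n - fibW (j + 3)) = (-1 : ℤ) ^ j * (fibP j).coeff k := by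
        have h := fibP_symm j k (by omega)
        rw [show (fibP j).natDegree - k = n - fibW (j + 3) by omega] at h
        exact h
      rw [hrec, hsym1, hstabk, hreck, hstab2, hstab3, hsym0, hsgn]
      rw [show (-1 : ℤ) ^ j * ((fibP j).coeff k - (fibP j).coeff (k - fibW (j + 1))) -
          (-1 : ℤ) ^ j * (fibP j).coeff k =
          (-1 : ℤ) ^ j * (-(fibP j).coeff (k - fibW (j + 1))) by ring]
      rw [abs_neg_one_pow_mul, abs_neg]
      exact ih j (by omega) _

/-- The coefficients of the infinite product `∏_{i≥1} (1 - x^{fᵢ})` all lie in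
`{-1, 0, 1}`: the coefficient of `xⁿ` stabilizes once `f_{m+1} > n`, and every
such stabilized coefficient has absolute value at most `1`. -/
theorem infinite_product_coeff_bound (n m : ℕ) (h : n < fibW (m + 1)) :
    |(∏ i ∈ Finset.Icc 1 m, (1 - Polynomial.X ^ fibW i : Polynomial ℤ)).coeff n| ≤ 1 :=
  fibP_bound m n
end

section
/- If g and h are 3-special polynomials in Z[t], then their product g·h is also 3-special. -/
open Polynomial

/-!
A triple `(a, b, c)` is special exactly when `a² + b² + c² - ab - bc - ca ≤ 1`. This quantity is
the norm of `a + bω + cω²` in `ℤ[ω]`, `ω` a primitive cube root of unity, so it is nonnegative and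
multiplicative for the product of `K = ℤ[T]/(T³ - 1)`. Since `R : ℤ[t] → K` is a ring
homomorphism, "norm at most one" is preserved under products.
-/

def eisensteinNorm (a b c : ℤ) : ℤ := a ^ 2 + b ^ 2 + c ^ 2 - a * b - b * c - c * a

lemma eisensteinNorm_nonneg (a b c : ℤ) : 0 ≤ eisensteinNorm a b c := by
  unfold eisensteinNorm
  nlinarith [sq_nonneg (a - b), sq_nonneg (b - c), sq_nonneg (c - a)]

lemma eisensteinNorm_mul (a b c a' b' c' : ℤ) :
    eisensteinNorm (a * a' + b * c' + c * b') (a * b' + b * a' + c * c')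
        (a * c' + b * b' + c * a') =
      eisensteinNorm a b c * eisensteinNorm a' b' c' := by
  unfold eisensteinNorm
  ring

lemma sq_add_mul_add_sq_le_one_iff (x y : ℤ) :
    x ^ 2 + x * y + y ^ 2 ≤ 1 ↔ (x = 0 ∧ y = 0) ∨ |x| + |x + y| + |y| = 2 := by
  by_cases hbound : -1 ≤ x ∧ x ≤ 1 ∧ -1 ≤ y ∧ y ≤ 1
  · obtain ⟨hx₁, hx₂, hy₁, hy₂⟩ := hbound
    interval_cases x <;> interval_cases y <;> decide
  · have hnorm : ¬ x ^ 2 + x * y + y ^ 2 ≤ 1 := fun h ↦ hbound <| by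
      refine ⟨?_, ?_, ?_, ?_⟩ <;> nlinarith [sq_nonneg (2 * x + y), sq_nonneg (x + 2 * y)]
    simp only [hnorm, false_iff, Int.abs_eq_natAbs]
    omega

lemma special_iff_eisensteinNorm_le_one (a b c : ℤ) :
    Special a b c ↔ eisensteinNorm a b c ≤ 1 := by
  have h := sq_add_mul_add_sq_le_one_iff (a - b) (b - c)
  rw [show a - b + (b - c) = a - c by ring, sub_eq_zero, sub_eq_zero] at h
  rw [Special, ← h, show eisensteinNorm a b c = (a - b) ^ 2 + (a - b) * (b - c) + (b - c) ^ 2 by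
    unfold eisensteinNorm; ring]

theorem Special.mul {a b c a' b' c' : ℤ} (h : Special a b c) (h' : Special a' b' c') :
    Special (a * a' + b * c' + c * b') (a * b' + b * a' + c * c') (a * c' + b * b' + c * a') := by
  rw [special_iff_eisensteinNorm_le_one] at h h' ⊢
  rw [eisensteinNorm_mul]
  exact mul_le_one₀ h (eisensteinNorm_nonneg _ _ _) h'

lemma AddMonoidAlgebra.coeff_mul_eq_sum {R G : Type*} [Semiring R] [AddCommGroup G] [Fintype G]
    (x y : AddMonoidAlgebra R G) (g : G) :
    (x * y).coeff g = ∑ h, x.coeff h * y.coeff (g - h) := by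
  rw [AddMonoidAlgebra.coeff_mul_apply_left, Finsupp.sum_fintype]
  · simp [sub_eq_neg_add]
  · simp

lemma special_coeff_mul {x y : AddMonoidAlgebra ℤ (ZMod 3)}
    (hx : Special (x.coeff 0) (x.coeff 1) (x.coeff 2))
    (hy : Special (y.coeff 0) (y.coeff 1) (y.coeff 2)) :
    Special ((x * y).coeff 0) ((x * y).coeff 1) ((x * y).coeff 2) := by
  simp only [AddMonoidAlgebra.coeff_mul_eq_sum]
  -- `ZMod 3` is `Fin 3` by definition, and differences such as `0 - 1` reduce to `2`.
  convert hx.mul hy using 1 <;> exact Fin.sum_univ_three _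

/-- The quotient map `R[X] → R[X] ⧸ (X ^ n - 1)`, with the target realised as the group ring
`R[ℤ/n]`; for `R = ℤ`, `n = 3` it is the map `R : ℤ[t] → K`. -/
noncomputable def foldMod (R : Type*) [Semiring R] (n : ℕ) : R[X] →+* AddMonoidAlgebra R (ZMod n) :=
  (AddMonoidAlgebra.mapDomainRingHom R (Nat.castAddMonoidHom (ZMod n))).comp
    (toFinsuppIso R).toRingHom

lemma coeff_foldMod_natCast {R : Type*} [Semiring R] {n : ℕ} (p : R[X]) (i : ℕ) :
    (foldMod R n p).coeff i = ∑ k ∈ p.support with k ≡ i [MOD n], p.coeff k := by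
  simp_rw [← ZMod.natCast_eq_natCast_iff]
  exact Finsupp.mapDomain_apply_eq_sum _ _

lemma rcoef_eq_coeff_foldMod (g : ℤ[X]) {i : ℕ} (hi : i < 3) :
    Rcoef i g = (foldMod ℤ 3 g).coeff i := by
  rw [coeff_foldMod_natCast, Rcoef]
  simp only [Nat.ModEq, Nat.mod_eq_of_lt hi]

lemma isThreeSpecial_iff (g : ℤ[X]) :
    IsThreeSpecial g ↔
      Special ((foldMod ℤ 3 g).coeff 0) ((foldMod ℤ 3 g).coeff 1) ((foldMod ℤ 3 g).coeff 2) := by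
  simp only [IsThreeSpecial, rcoef_eq_coeff_foldMod g (by norm_num : 0 < 3),
    rcoef_eq_coeff_foldMod g (by norm_num : 1 < 3), rcoef_eq_coeff_foldMod g (by norm_num : 2 < 3),
    Nat.cast_zero, Nat.cast_one, Nat.cast_ofNat]

theorem mul_threeSpecial (g h : Polynomial ℤ)
    (hg : IsThreeSpecial g) (hh : IsThreeSpecial h) : IsThreeSpecial (g * h) := by
  rw [isThreeSpecial_iff] at hg hh ⊢
  rw [map_mul]
  exact special_coeff_mul hg hh
end
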